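/- Let S be a 4×4 matrix and define V_g(S) := ∑_{n=0}^{3} β_n ∑_{k=0}^{n} (−1)^{n+k} e_k(S) S^{n−k} and V_f(S) := ∑_{n=0}^{3} β_{4−n} ∑_{k=0}^{n} (−1)^{n+k} e_k(S⁻¹) S^{−n+k}, with e_k the elementary symmetric polynomials of the eigenvalues. Then V_g(S) + det(S)·V_f(S) = (∑_{n=0}^{4} β_n e_n(S))·I. -/

import Mathlib

/-!
The algebraic identity `V_g(S) + det S · V_f(S) = V(S) · I` of Hassan–Rosen
bimetric theory, for an invertible `4 × 4` real matrix `S`, where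
`V_g(S) = ∑_{n=0}^{3} β_n ∑_{k=0}^{n} (-1)^{n+k} e_k(S) S^{n-k}`,
`V_f(S) = ∑_{n=0}^{3} β_{4-n} ∑_{k=0}^{n} (-1)^{n+k} e_k(S⁻¹) S^{-n+k}`,
`V(S) = ∑_{n=0}^{4} β_n e_n(S)`, and `e_k` are the elementary symmetric
polynomials of the eigenvalues, defined via `det (1 + t S) = ∑ k, e_k(S) t^k`.
-/

/-- `esym n S k` is the `k`-th elementary symmetric polynomial of the eigenvalues of `S`. -/
noncomputable def esym (n : ℕ) (S : Matrix (Fin n) (Fin n) ℝ) (k : ℕ) : ℝ :=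
  ((1 + (Polynomial.X : Polynomial ℝ) • S.map Polynomial.C).det).coeff k

/-- The tensor potential `V_g(S)`. -/
noncomputable def Vg (β : ℕ → ℝ) (S : Matrix (Fin 4) (Fin 4) ℝ) :
    Matrix (Fin 4) (Fin 4) ℝ :=
  ∑ n ∈ Finset.range 4, β n •
    ∑ k ∈ Finset.range (n + 1), ((-1 : ℝ) ^ (n + k) * esym 4 S k) • S ^ (n - k)

/-- The tensor potential `V_f(S)` (with integer powers `S^(k-n)`). -/
noncomputable def Vf (β : ℕ → ℝ) (S : Matrix (Fin 4) (Fin 4) ℝ) :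
    Matrix (Fin 4) (Fin 4) ℝ :=
  ∑ n ∈ Finset.range 4, β (4 - n) •
    ∑ k ∈ Finset.range (n + 1),
      ((-1 : ℝ) ^ (n + k) * esym 4 S⁻¹ k) • S ^ ((k : ℤ) - (n : ℤ))

/-!
With `Y_m(S) = ∑_{k ≤ m} e_k(S) (-S)^(m-k)` one has the Horner recursion
`Y_{m+1} = -S Y_m + e_{m+1}`, `Y_0 = 1`, and `Y_n = 0` by Cayley–Hamilton. Since
`det S · e_k(S⁻¹) = e_{n-k}(S)`, running the recursion for `S⁻¹` forwards is running the one
for `S` backwards: `det S · Y_m(S⁻¹) = e_{n-m}(S) - Y_{n-m}(S)`. Substituting this into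
`V_f`, the sum `V_g + det S · V_f` telescopes to `∑ β_m e_m(S)`.
-/

open Polynomial Matrix Finset

lemma Matrix.zpow_natCast_sub_natCast_eq_inv_pow {ι R : Type*} [Fintype ι] [DecidableEq ι]
    [CommRing R] (A : Matrix ι ι R) {i j : ℕ} (h : i ≤ j) :
    A ^ ((i : ℤ) - j) = A⁻¹ ^ (j - i) := by
  rw [show (i : ℤ) - j = -((j - i : ℕ) : ℤ) by omega, zpow_neg_natCast, inv_pow']

section

variable {n : ℕ}

lemma esym_eq_coeff_charpolyRev (S : Matrix (Fin n) (Fin n) ℝ) (k : ℕ) :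
    esym n S k = (-S).charpolyRev.coeff k := by
  rw [esym, charpolyRev, Matrix.map_neg _ (map_neg C), smul_neg, sub_neg_eq_add]

lemma esym_eq_coeff_charpoly (S : Matrix (Fin n) (Fin n) ℝ) {k : ℕ} (hk : k ≤ n) :
    esym n S k = (-S).charpoly.coeff (n - k) := by
  have hdeg : (-S).charpoly.natDegree = n := by simp [charpoly_natDegree_eq_dim]
  rw [esym_eq_coeff_charpolyRev, ← reverse_charpoly, coeff_reverse, revAt_le (hdeg.symm ▸ hk),
    hdeg]

lemma esym_zero (S : Matrix (Fin n) (Fin n) ℝ) : esym n S 0 = 1 := by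
  rw [esym_eq_coeff_charpolyRev, coeff_zero_eq_eval_zero, eval_charpolyRev]

lemma det_mul_esym_inv (S : Matrix (Fin n) (Fin n) ℝ) (hS : IsUnit S.det) {k : ℕ}
    (hk : k ≤ n) :
    S.det * esym n S⁻¹ k = esym n S (n - k) := by
  have hmul : (1 + (X : ℝ[X]) • S⁻¹.map C) * S.map C = (-S).charmatrix := by
    have h1 : S⁻¹.map (C : ℝ →+* ℝ[X]) * S.map C = 1 := by
      rw [← RingHom.mapMatrix_apply, ← RingHom.mapMatrix_apply, ← map_mul,
        nonsing_inv_mul S hS, map_one]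
    rw [add_mul, one_mul, smul_mul_assoc, h1, charmatrix, RingHom.mapMatrix_apply,
      Matrix.map_neg _ (map_neg C), sub_neg_eq_add, add_comm, scalar_apply, smul_one_eq_diagonal]
  have hdet : (1 + (X : ℝ[X]) • S⁻¹.map C).det * C S.det = (-S).charpoly := by
    rw [charpoly, ← hmul, det_mul, RingHom.map_det]
    rfl
  rw [esym_eq_coeff_charpoly S (Nat.sub_le n k), Nat.sub_sub_self hk, ← hdet, coeff_mul_C,
    mul_comm, esym]

/-- `Y_m(S) = ∑_{k ≤ m} e_k(S) (-S)^(m-k)`, written with the signs used in `Vg`: the top `m + 1`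
coefficients of `det (X + S) = ∑_k e_k(S) X^(n-k)`, evaluated at `-S`. -/
noncomputable def partialCharEval (S : Matrix (Fin n) (Fin n) ℝ) (m : ℕ) :
    Matrix (Fin n) (Fin n) ℝ :=
  ∑ k ∈ range (m + 1), ((-1 : ℝ) ^ (m + k) * esym n S k) • S ^ (m - k)

lemma partialCharEval_eq_sum_neg_pow (S : Matrix (Fin n) (Fin n) ℝ) (m : ℕ) :
    partialCharEval S m = ∑ k ∈ range (m + 1), esym n S k • (-S) ^ (m - k) := by
  refine sum_congr rfl fun k hk => ?_
  obtain ⟨j, rfl⟩ := Nat.exists_eq_add_of_le (mem_range_succ_iff.mp hk)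
  rw [Nat.add_sub_cancel_left, ← neg_one_smul ℝ S, _root_.smul_pow, smul_smul,
    show k + j + k = j + 2 * k by ring, pow_add, pow_mul, neg_one_sq, one_pow, mul_one, mul_comm]

lemma partialCharEval_zero (S : Matrix (Fin n) (Fin n) ℝ) : partialCharEval S 0 = 1 := by
  simp [partialCharEval, esym_zero]

lemma partialCharEval_succ (S : Matrix (Fin n) (Fin n) ℝ) (m : ℕ) :
    partialCharEval S (m + 1) = -S * partialCharEval S m + esym n S (m + 1) • 1 := by
  simp only [partialCharEval_eq_sum_neg_pow, sum_range_succ _ (m + 1), Nat.sub_self, pow_zero,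
    mul_sum, mul_smul_comm]
  congr 1
  refine sum_congr rfl fun k hk => ?_
  rw [← pow_succ', Nat.sub_add_comm (mem_range_succ_iff.mp hk)]

/-- Cayley–Hamilton. -/
lemma partialCharEval_self (S : Matrix (Fin n) (Fin n) ℝ) : partialCharEval S n = 0 := by
  have hdeg : (-S).charpoly.natDegree = n := by simp [charpoly_natDegree_eq_dim]
  have h := aeval_self_charpoly (-S)
  rw [aeval_eq_sum_range, hdeg, ← sum_range_reflect] at h
  rw [partialCharEval_eq_sum_neg_pow, ← h]
  refine sum_congr rfl fun k hk => ?_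
  have hk := mem_range_succ_iff.mp hk
  rw [esym_eq_coeff_charpoly S hk, Nat.add_sub_cancel]

lemma det_smul_partialCharEval_inv (S : Matrix (Fin n) (Fin n) ℝ) (hS : IsUnit S.det) {m : ℕ}
    (hm : m ≤ n) :
    S.det • partialCharEval S⁻¹ m = esym n S (n - m) • 1 - partialCharEval S (n - m) := by
  induction m with
  | zero =>
    have hdet := det_mul_esym_inv S hS (Nat.zero_le n)
    rw [esym_zero, mul_one, Nat.sub_zero] at hdet
    rw [partialCharEval_zero, Nat.sub_zero, partialCharEval_self, hdet, sub_zero]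
  | succ m ih =>
    obtain ⟨j, hj⟩ : ∃ j, n - m = j + 1 := ⟨n - (m + 1), by omega⟩
    have hY : esym n S (n - m) • 1 - partialCharEval S (n - m) = S * partialCharEval S j := by
      rw [hj, partialCharEval_succ, neg_mul]
      abel
    rw [partialCharEval_succ, smul_add, smul_smul, det_mul_esym_inv S hS hm, ← mul_smul_comm,
      ih (by omega), hY, ← mul_assoc, neg_mul, nonsing_inv_mul S hS, neg_one_mul,
      show n - (m + 1) = j by omega]
    abel

theorem sum_smul_partialCharEval_add_det_smul_sum (β : ℕ → ℝ)
    (S : Matrix (Fin n) (Fin n) ℝ) (hS : IsUnit S.det) :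
    ∑ m ∈ range n, β m • partialCharEval S m +
        S.det • ∑ m ∈ range n, β (n - m) • partialCharEval S⁻¹ m =
      (∑ m ∈ range (n + 1), β m * esym n S m) • 1 := by
  have hdual : S.det • ∑ m ∈ range n, β (n - m) • partialCharEval S⁻¹ m =
      ∑ m ∈ range n, ((β (m + 1) * esym n S (m + 1)) • 1 -
        β (m + 1) • partialCharEval S (m + 1)) := by
    rw [smul_sum, ← sum_range_reflect]
    refine sum_congr rfl fun m hm => ?_
    have hm := mem_range.mp hm
    rw [smul_comm, det_smul_partialCharEval_inv S hS (by omega),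
      show n - (n - 1 - m) = m + 1 by omega, smul_sub, smul_smul]
  have htelescope : ∑ m ∈ range n, β m • partialCharEval S m -
      ∑ m ∈ range n, β (m + 1) • partialCharEval S (m + 1) = β 0 • 1 := by
    rw [← sum_sub_distrib, sum_range_sub', partialCharEval_zero, partialCharEval_self, smul_zero,
      sub_zero]
  rw [hdual, sum_sub_distrib, sum_range_succ', add_smul, sum_smul, esym_zero, mul_one]
  linear_combination (norm := module) htelescope

end

lemma Vf_eq_sum_smul_partialCharEval_inv (β : ℕ → ℝ) (S : Matrix (Fin 4) (Fin 4) ℝ) :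
    Vf β S = ∑ m ∈ range 4, β (4 - m) • partialCharEval S⁻¹ m := by
  refine sum_congr rfl fun m _ => congrArg _ (sum_congr rfl fun k hk => ?_)
  rw [zpow_natCast_sub_natCast_eq_inv_pow S (mem_range_succ_iff.mp hk)]

theorem Vg_add_det_smul_Vf (β : ℕ → ℝ) (S : Matrix (Fin 4) (Fin 4) ℝ)
    (hS : IsUnit S.det) :
    Vg β S + S.det • Vf β S =
      (∑ n ∈ Finset.range 5, β n * esym 4 S n) • (1 : Matrix (Fin 4) (Fin 4) ℝ) := by
  rw [Vf_eq_sum_smul_partialCharEval_inv]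
  exact sum_smul_partialCharEval_add_det_smul_sum β S hS
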